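/- Transferability bound (Theorem 1, abstract form): Let C be an arbitrary set of 'source classifiers', each c ∈ C assigning to every index i a probability distribution c_i on 𝒵, and let the source log-likelihood be l_Z(c) = (1/n) Σ_i log c_i(z_i). Let K be a set of 'target classifiers', each k ∈ K assigning to every i a probability distribution k_i on 𝒴, with target log-likelihood l_Y(k) = (1/n) Σ_i log k_i(y_i). Fix c* ∈ C with c*_i(z_i) > 0 for all i, and suppose K contains the classifier k̄ defined by k̄_i(a) = Σ_{b∈𝒵} P̂(a|b) c*_i(b). Then max_{k∈K} l_Y(k) ≥ l_Z(c*) - H(Y|Z). -/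

import Mathlib

open Finset Real

noncomputable def Pjoint {n : ℕ} {Y Z : Type*} [Fintype Y] [Fintype Z]
    [DecidableEq Y] [DecidableEq Z] (y : Fin n → Y) (z : Fin n → Z) (a : Y) (b : Z) : ℝ :=
  ((Finset.univ.filter fun i => y i = a ∧ z i = b).card : ℝ) / n

noncomputable def Pmarg {n : ℕ} {Z : Type*} [Fintype Z] [DecidableEq Z]
    (z : Fin n → Z) (b : Z) : ℝ :=
  ((Finset.univ.filter fun i => z i = b).card : ℝ) / n

open scoped Classical in
/-- Empirical conditional entropy H(Y|Z). -/
noncomputable def condEnt {n : ℕ} {Y Z : Type*} [Fintype Y] [Fintype Z]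
    [DecidableEq Y] [DecidableEq Z] (y : Fin n → Y) (z : Fin n → Z) : ℝ :=
  -∑ a : Y, ∑ b : Z, if 0 < Pjoint y z a b then
      Pjoint y z a b * Real.log (Pjoint y z a b / Pmarg z b) else 0

open scoped Classical in
/-- Empirical entropy of a label sequence. -/
noncomputable def entOf {n : ℕ} {Z : Type*} [Fintype Z] [DecidableEq Z]
    (z : Fin n → Z) : ℝ :=
  -∑ b : Z, if 0 < Pmarg z b then Pmarg z b * Real.log (Pmarg z b) else 0

/-! Keeping only the term `b = z i` of the mixture `k̄ i (y i) = ∑ b, P̂(y i | b) * c* i b` gives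
`log k̄ i (y i) ≥ log P̂(y i | z i) + log c* i (z i)`. Averaging over `i`, the empirical mean of
`log P̂(y i | z i)` is exactly `-H(Y|Z)`, and `kmax` dominates `k̄`. -/

section
variable {n : ℕ} {Y Z : Type*} [Fintype Y] [Fintype Z] [DecidableEq Y] [DecidableEq Z]

lemma Pjoint_nonneg (y : Fin n → Y) (z : Fin n → Z) (a : Y) (b : Z) : 0 ≤ Pjoint y z a b := by
  unfold Pjoint; positivity

lemma Pmarg_nonneg (z : Fin n → Z) (b : Z) : 0 ≤ Pmarg z b := by
  unfold Pmarg; positivity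

lemma Pjoint_apply_pos (y : Fin n → Y) (z : Fin n → Z) (i : Fin n) :
    0 < Pjoint y z (y i) (z i) := by
  have hn : (0 : ℝ) < n := by exact_mod_cast i.pos
  exact div_pos (by exact_mod_cast card_pos.mpr ⟨i, by simp⟩) hn

lemma Pmarg_apply_pos (z : Fin n → Z) (i : Fin n) : 0 < Pmarg z (z i) := by
  have hn : (0 : ℝ) < n := by exact_mod_cast i.pos
  exact div_pos (by exact_mod_cast card_pos.mpr ⟨i, by simp⟩) hn

lemma one_div_mul_sum_eq_sum_Pjoint_mul (y : Fin n → Y) (z : Fin n → Z) (g : Y → Z → ℝ) :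
    (1 / n : ℝ) * ∑ i, g (y i) (z i) = ∑ a, ∑ b, Pjoint y z a b * g a b := by
  have hcount : ∑ i, g (y i) (z i) =
      ∑ a, ∑ b, ((univ.filter fun i => y i = a ∧ z i = b).card : ℝ) * g a b := by
    calc ∑ i, g (y i) (z i)
        = ∑ i, ∑ a, ∑ b, if y i = a ∧ z i = b then g a b else 0 := by
          simp [ite_and]
      _ = ∑ a, ∑ b, ∑ i, if y i = a ∧ z i = b then g a b else 0 := by
          rw [sum_comm]; simp_rw [sum_comm (γ := Fin n)]
      _ = _ := by simp [sum_ite]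
  simp only [hcount, mul_sum, Pjoint]
  congr! 2 with a _ b _
  ring

lemma condEnt_eq_neg_sum (y : Fin n → Y) (z : Fin n → Z) :
    condEnt y z = -∑ a, ∑ b, Pjoint y z a b * Real.log (Pjoint y z a b / Pmarg z b) := by
  unfold condEnt
  congr! 3 with a _ b _
  split_ifs with h
  · rfl
  · rw [le_antisymm (not_lt.mp h) (Pjoint_nonneg y z a b), zero_mul]

lemma one_div_mul_sum_log_condProb (y : Fin n → Y) (z : Fin n → Z) :
    (1 / n : ℝ) * ∑ i, Real.log (Pjoint y z (y i) (z i) / Pmarg z (z i)) = -condEnt y z := by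
  rw [one_div_mul_sum_eq_sum_Pjoint_mul y z (fun a b => Real.log (Pjoint y z a b / Pmarg z b)),
    condEnt_eq_neg_sum, neg_neg]

end

lemma log_add_log_le_log_sum_mul {ι : Type*} [Fintype ι] {w c : ι → ℝ} (hw : ∀ j, 0 ≤ w j)
    (hc : ∀ j, 0 ≤ c j) {j : ι} (hwj : 0 < w j) (hcj : 0 < c j) :
    Real.log (w j) + Real.log (c j) ≤ Real.log (∑ k, w k * c k) := by
  rw [← Real.log_mul hwj.ne' hcj.ne']
  exact Real.log_le_log (mul_pos hwj hcj)
    (single_le_sum (fun k _ => mul_nonneg (hw k) (hc k)) (mem_univ j))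

theorem stmt16_general {n : ℕ} {Y Z : Type*} [Fintype Y] [Fintype Z]
    [DecidableEq Y] [DecidableEq Z] (y : Fin n → Y) (z : Fin n → Z)
    (C : Set (Fin n → Z → ℝ)) (K : Set (Fin n → Y → ℝ))
    (hCdist : ∀ c ∈ C, ∀ i, (∀ b, 0 ≤ c i b) ∧ ∑ b : Z, c i b = 1)
    (cstar : Fin n → Z → ℝ) (hcC : cstar ∈ C)
    (hcz : ∀ i, 0 < cstar i (z i))
    (hkbar : (fun i a => ∑ b : Z, (Pjoint y z a b / Pmarg z b) * cstar i b) ∈ K)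
    (kmax : Fin n → Y → ℝ)
    (hkmax : ∀ k ∈ K, (1 / n : ℝ) * ∑ i : Fin n, Real.log (k i (y i)) ≤
        (1 / n : ℝ) * ∑ i : Fin n, Real.log (kmax i (y i))) :
    (1 / n : ℝ) * ∑ i : Fin n, Real.log (kmax i (y i)) ≥
      (1 / n : ℝ) * ∑ i : Fin n, Real.log (cstar i (z i)) - condEnt y z := by
  refine le_trans ?_ (hkmax _ hkbar)
  rw [sub_eq_add_neg, ← one_div_mul_sum_log_condProb y z, ← mul_add, ← sum_add_distrib]
  gcongr with i
  rw [add_comm]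
  exact log_add_log_le_log_sum_mul
    (fun b => div_nonneg (Pjoint_nonneg y z _ b) (Pmarg_nonneg z b))
    (hCdist cstar hcC i).1 (div_pos (Pjoint_apply_pos y z i) (Pmarg_apply_pos z i)) (hcz i)

theorem stmt16 {n : ℕ} (hn : 1 ≤ n) {Y Z : Type*} [Fintype Y] [Fintype Z]
    [DecidableEq Y] [DecidableEq Z] (y : Fin n → Y) (z : Fin n → Z)
    (C : Set (Fin n → Z → ℝ)) (K : Set (Fin n → Y → ℝ))
    (hCdist : ∀ c ∈ C, ∀ i, (∀ b, 0 ≤ c i b) ∧ ∑ b : Z, c i b = 1)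
    (hKdist : ∀ k ∈ K, ∀ i, (∀ a, 0 ≤ k i a) ∧ ∑ a : Y, k i a = 1)
    (cstar : Fin n → Z → ℝ) (hcC : cstar ∈ C)
    (hcz : ∀ i, 0 < cstar i (z i))
    (hcnull : ∀ i b, Pmarg z b = 0 → cstar i b = 0)
    (hkbar : (fun i a => ∑ b : Z, (Pjoint y z a b / Pmarg z b) * cstar i b) ∈ K)
    (kmax : Fin n → Y → ℝ) (hkmaxK : kmax ∈ K)
    (hkmax : ∀ k ∈ K, (1 / n : ℝ) * ∑ i : Fin n, Real.log (k i (y i)) ≤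
        (1 / n : ℝ) * ∑ i : Fin n, Real.log (kmax i (y i))) :
    (1 / n : ℝ) * ∑ i : Fin n, Real.log (kmax i (y i)) ≥
      (1 / n : ℝ) * ∑ i : Fin n, Real.log (cstar i (z i)) - condEnt y z :=
  stmt16_general y z C K hCdist cstar hcC hcz hkbar kmax hkmax
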